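/- arXiv:2306.08718 — 6 statements merged into one kernel-verified Lean document; each statement's English description precedes it below -/
import Mathlib

section
/- Let F be a field, n ≥ 1, and let I_n ⊆ F[x_{i,j} : 1 ≤ i,j ≤ n] be the ideal generated by: all products x_{i,j}·x_{i,j'} of two variables in the same row, all products x_{i,j}·x_{i',j} of two variables in the same column, all row sums x_{i,1}+...+x_{i,n}, and all column sums x_{1,j}+...+x_{n,j}. For subsets S, T ⊆ [n], define a_{S,T} = Σ_f Π_{i∈S} x_{i,f(i)}, the sum over all injective functions f: S → T. If |S| + |T| > n, then a_{S,T} ∈ I_n. -/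
/-!
Work modulo the ideal, writing `x i j` for the class of `X (i, j)`: there `x i j * x i' j = 0`
and every row sums to zero. A product `∏ i ∈ S, x i (f i)` with `f` not injective then
vanishes, so `a_{S,T}` is the sum over *all* maps `S → T`, which factors as
`∏ i ∈ S, ∑ j ∈ T, x i j = ± ∏ i ∈ S, ∑ j ∉ T, x i j`. Expanding the right-hand side again
gives a sum over maps `S → Tᶜ`, none of which is injective because `|Tᶜ| < |S|`.
-/

open MvPolynomial

/-- The ideal generated by all products of two variables in the same row, all
products of two variables in the same column, all row sums, and all column sums
of the n × n variable matrix. -/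
noncomputable def matIdeal (F : Type*) [Field F] (n : ℕ) :
    Ideal (MvPolynomial (Fin n × Fin n) F) :=
  Ideal.span {p | (∃ i j j', p = MvPolynomial.X (i, j) * MvPolynomial.X (i, j')) ∨
    (∃ i i' j, p = MvPolynomial.X (i, j) * MvPolynomial.X (i', j)) ∨
    (∃ i, p = ∑ j, MvPolynomial.X (i, j)) ∨
    (∃ j, p = ∑ i, MvPolynomial.X (i, j))}

/-- \`a_{S,T}\`: the sum over injections \`f : S → T\` of \`∏_{i ∈ S} x_{i, f i}\`. -/
noncomputable def aST {F : Type*} [Field F] {n : ℕ} (S T : Finset (Fin n)) :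
    MvPolynomial (Fin n × Fin n) F :=
  ∑ f ∈ Finset.univ.filter (fun f : S → T => Function.Injective f),
    ∏ i : S, MvPolynomial.X ((i : Fin n), ((f i : Fin n)))

open Function

section ZeroColumnProducts

variable {R α β : Type*} {x : α → β → R} {s : Finset α}

theorem prod_eq_zero_of_not_injective [CommMonoidWithZero R]
    (hcol : ∀ i i' j, i ≠ i' → x i j * x i' j = 0) {g : s → β} (hg : ¬ Injective g) :
    ∏ i : s, x i (g i) = 0 := by
  classical
  obtain ⟨a, b, hab, hne⟩ := not_injective_iff.mp hg
  have hdvd : x a (g a) * x b (g b) ∣ ∏ i : s, x i (g i) := by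
    rw [← Finset.prod_pair (f := fun i : s => x i (g i)) hne]
    exact Finset.prod_dvd_prod_of_subset _ _ _ (Finset.subset_univ _)
  rwa [hab, hcol _ _ _ (Subtype.coe_ne_coe.mpr hne), zero_dvd_iff] at hdvd

variable [DecidableEq α]

theorem prod_sum_eq_zero_of_card_lt [CommSemiring R]
    (hcol : ∀ i i' j, i ≠ i' → x i j * x i' j = 0) {u : Finset β} (hu : u.card < s.card) :
    ∏ i : s, ∑ j : u, x i j = 0 := by
  rw [Fintype.prod_sum]
  refine Finset.sum_eq_zero fun g _ => prod_eq_zero_of_not_injective hcol fun hg => ?_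
  obtain ⟨a, b, hne, hab⟩ :=
    Fintype.exists_ne_map_eq_of_card_lt g (by simpa only [Fintype.card_coe] using hu)
  exact hne (hg (congrArg Subtype.val hab))

theorem sum_injective_prod_eq_zero [CommRing R] [Fintype β] [DecidableEq β]
    (hcol : ∀ i i' j, i ≠ i' → x i j * x i' j = 0) (hrow : ∀ i, ∑ j, x i j = 0)
    {t : Finset β} (h : Fintype.card β < s.card + t.card) :
    ∑ f ∈ Finset.univ.filter (fun f : s → t => Injective f), ∏ i : s, x i (f i) = 0 := by
  have hrow_split (i : α) : ∑ j : t, x i j = -∑ j : (tᶜ : Finset β), x i j := by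
    rw [eq_neg_iff_add_eq_zero, Finset.sum_coe_sort, Finset.sum_coe_sort,
      Finset.sum_add_sum_compl, hrow]
  have hcompl : (tᶜ : Finset β).card < s.card := by
    have := t.card_le_univ
    rw [Finset.card_compl]
    omega
  calc ∑ f ∈ Finset.univ.filter (fun f : s → t => Injective f), ∏ i : s, x i (f i)
      = ∑ f : s → t, ∏ i : s, x i (f i) :=
        Finset.sum_filter_of_ne fun f _ hf => by
          by_contra hinj
          exact hf (prod_eq_zero_of_not_injective hcol fun hf' => hinj hf'.of_comp)
    _ = ∏ i : s, ∑ j : t, x i j := (Fintype.prod_sum fun (i : s) (j : t) => x i j).symm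
    _ = (-1) ^ s.card * ∏ i : s, ∑ j : (tᶜ : Finset β), x i j := by
        simp only [hrow_split, Finset.prod_neg, Finset.card_univ, Fintype.card_coe]
    _ = 0 := by rw [prod_sum_eq_zero_of_card_lt hcol hcompl, mul_zero]

end ZeroColumnProducts

theorem aST_mem_matIdeal_general (F : Type*) [Field F] (n : ℕ)
    (S T : Finset (Fin n)) (h : n < S.card + T.card) :
    (aST S T : MvPolynomial (Fin n × Fin n) F) ∈ matIdeal F n := by
  set q := Ideal.Quotient.mk (matIdeal F n)
  have hcol (i i' j : Fin n) (_ : i ≠ i') : q (X (i, j)) * q (X (i', j)) = 0 := by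
    rw [← map_mul, Ideal.Quotient.eq_zero_iff_mem]
    exact Ideal.subset_span (Or.inr (Or.inl ⟨i, i', j, rfl⟩))
  have hrow (i : Fin n) : ∑ j, q (X (i, j)) = 0 := by
    rw [← map_sum, Ideal.Quotient.eq_zero_iff_mem]
    exact Ideal.subset_span (Or.inr (Or.inr (Or.inl ⟨i, rfl⟩)))
  rw [← Ideal.Quotient.eq_zero_iff_mem, aST, map_sum]
  simp only [map_prod]
  exact sum_injective_prod_eq_zero hcol hrow (by rwa [Fintype.card_fin])

/-- If |S| + |T| > n then a_{S,T} lies in the ideal I_n. -/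
theorem aST_mem_matIdeal (F : Type*) [Field F] (n : ℕ) (hn : 1 ≤ n)
    (S T : Finset (Fin n)) (h : n < S.card + T.card) :
    (aST S T : MvPolynomial (Fin n × Fin n) F) ∈ matIdeal F n :=
  aST_mem_matIdeal_general F n S T h
end

section
/- Let F be a field, n ≥ 1, and I_n the ideal of F[x_{n×n}] generated by same-row products, same-column products, row sums, and column sums of the variable matrix. For subsets S, T ⊆ [n], the element a_{S,T} = Σ over injections f: S → T of Π_{i∈S} x_{i,f(i)} satisfies a_{S,T} ≡ Π_{i∈S} (Σ_{j∈T} x_{i,j}) modulo I_n. -/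
open MvPolynomial

/-! Expanding the product of the row sums gives one monomial for every map `S → T`; the
monomials of non-injective maps contain two variables of one column, so they lie in the ideal,
and what is left is exactly `a_{S,T}`. -/

theorem Finset.prod_sum_eq_sum_fun {ι κ R : Type*} [CommSemiring R] [DecidableEq ι]
    (S : Finset ι) (T : Finset κ) (g : ι → κ → R) :
    ∏ i ∈ S, ∑ j ∈ T, g i j = ∑ f : S → T, ∏ i : S, g i (f i) := by
  rw [← Finset.prod_coe_sort, ← Fintype.piFinset_univ,
    ← Finset.prod_univ_sum (fun _ => univ) fun (i : S) (j : T) => g i j]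
  exact Finset.prod_congr rfl fun i _ => (Finset.sum_coe_sort T _).symm

theorem Ideal.prod_mem_of_mul_mem {ι R : Type*} [CommSemiring R] [DecidableEq ι]
    {I : Ideal R} {s : Finset ι} {g : ι → R} {i i' : ι} (hi : i ∈ s) (hi' : i' ∈ s)
    (hne : i ≠ i') (h : g i * g i' ∈ I) : ∏ x ∈ s, g x ∈ I := by
  have hi'_erase : i' ∈ s.erase i := Finset.mem_erase.mpr ⟨hne.symm, hi'⟩
  rw [← Finset.mul_prod_erase s g hi, ← Finset.mul_prod_erase _ g hi'_erase, ← mul_assoc]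
  exact I.mul_mem_right _ h

theorem X_mul_X_same_column_mem_matIdeal (F : Type*) [Field F] {n : ℕ} (i i' j : Fin n) :
    (X (i, j) * X (i', j) : MvPolynomial (Fin n × Fin n) F) ∈ matIdeal F n :=
  Ideal.subset_span (Or.inr (Or.inl ⟨i, i', j, rfl⟩))

theorem prod_X_mem_matIdeal_of_not_injective (F : Type*) [Field F] {n : ℕ}
    {S T : Finset (Fin n)} {f : S → T} (hf : ¬ Function.Injective f) :
    (∏ i : S, X ((i : Fin n), (f i : Fin n)) : MvPolynomial (Fin n × Fin n) F) ∈
      matIdeal F n := by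
  obtain ⟨i, i', hfi, hne⟩ : ∃ i i', f i = f i' ∧ i ≠ i' := by
    simpa only [Function.Injective, not_forall, exists_prop] using hf
  refine Ideal.prod_mem_of_mul_mem (Finset.mem_univ i) (Finset.mem_univ i') hne ?_
  simpa only [hfi] using X_mul_X_same_column_mem_matIdeal F (i : Fin n) i' (f i')

theorem aST_congruence_general (F : Type*) [Field F] (n : ℕ)
    (S T : Finset (Fin n)) :
    (aST S T : MvPolynomial (Fin n × Fin n) F) -
      ∏ i ∈ S, (∑ j ∈ T, X (i, j)) ∈ matIdeal F n := by
  classical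
  rw [Finset.prod_sum_eq_sum_fun, aST,
    ← Finset.sum_filter_add_sum_filter_not Finset.univ (fun f : S → T => Function.Injective f),
    sub_add_cancel_left]
  refine (matIdeal F n).neg_mem (Ideal.sum_mem _ fun f hf => ?_)
  exact prod_X_mem_matIdeal_of_not_injective F (Finset.mem_filter.mp hf).2

/-- a_{S,T} is congruent to ∏_{i ∈ S} (∑_{j ∈ T} x_{i,j}) modulo I_n. -/
theorem aST_congruence (F : Type*) [Field F] (n : ℕ) (hn : 1 ≤ n)
    (S T : Finset (Fin n)) :
    (aST S T : MvPolynomial (Fin n × Fin n) F) -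
      ∏ i ∈ S, (∑ j ∈ T, X (i, j)) ∈ matIdeal F n :=
  aST_congruence_general F n S T
end

section
/- Let F be a field and let I_n ⊆ F[x_{n×n}] be the ideal generated by same-row products, same-column products, row sums, and column sums. Then the images in F[x_{n×n}]/I_n of the squarefree monomials m(R) = Π_{(i,j)∈R} x_{i,j}, taken over all non-attacking rook placements R ⊆ [n]×[n], span F[x_{n×n}]/I_n as an F-vector space. -/
open MvPolynomial

lemma XX_mem (F : Type*) [Field F] (n : ℕ) (p q : Fin n × Fin n)
    (h : p.1 = q.1 ∨ p.2 = q.2) : (X p : MvPolynomial (Fin n × Fin n) F) * X q ∈ matIdeal F n := by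
  obtain ⟨pi, pj⟩ := p
  obtain ⟨qi, qj⟩ := q
  apply Ideal.subset_span
  rcases h with h | h <;> simp only at h <;> subst h
  · exact Or.inl ⟨pi, pj, qj, rfl⟩
  · exact Or.inr (Or.inl ⟨pi, qi, pj, rfl⟩)

lemma mono_mem (F : Type*) [Field F] (n : ℕ) (p q : Fin n × Fin n)
    (a : (Fin n × Fin n) →₀ ℕ) (hle : Finsupp.single p 1 + Finsupp.single q 1 ≤ a)
    (h : p.1 = q.1 ∨ p.2 = q.2) :
    (monomial a (1 : F)) ∈ matIdeal F n := by
  have e : (monomial a (1 : F)) =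
      monomial (a - (Finsupp.single p 1 + Finsupp.single q 1)) 1 * (X p * X q) := by
    rw [X, X, monomial_mul, one_mul, monomial_mul, one_mul, tsub_add_cancel_of_le hle]
  rw [e]
  exact Ideal.mul_mem_left _ _ (XX_mem F n p q h)

lemma key_mem (F : Type*) [Field F] (n : ℕ) (a : (Fin n × Fin n) →₀ ℕ) :
    Ideal.Quotient.mk (matIdeal F n) (monomial a 1) ∈
      Submodule.span F
      {y : MvPolynomial (Fin n × Fin n) F ⧸ matIdeal F n |
        ∃ R : Finset (Fin n × Fin n),
          ((R : Set (Fin n × Fin n)).Pairwise fun p q => p.1 ≠ q.1 ∧ p.2 ≠ q.2) ∧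
          y = Ideal.Quotient.mk (matIdeal F n) (∏ p ∈ R, X p)} := by
  classical
  by_cases hsq : ∀ p, a p ≤ 1
  · by_cases hrook : (a.support : Set (Fin n × Fin n)).Pairwise fun p q => p.1 ≠ q.1 ∧ p.2 ≠ q.2
    · apply Submodule.subset_span
      refine ⟨a.support, hrook, ?_⟩
      have e : (∏ p ∈ a.support, (X p : MvPolynomial (Fin n × Fin n) F)) =
          monomial (∑ p ∈ a.support, Finsupp.single p 1) 1 := by
        induction a.support using Finset.induction with
        | empty => simp [monomial_zero']
        | insert _ _ h ih => rw [Finset.prod_insert h, Finset.sum_insert h, ih, X, monomial_mul, one_mul]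
      have e2 : (∑ p ∈ a.support, Finsupp.single p 1) = a := by
        ext q
        rw [Finsupp.finset_sum_apply]
        simp only [Finsupp.single_apply]
        rw [Finset.sum_ite_eq' a.support q (fun _ => 1)]
        by_cases hq : q ∈ a.support
        · have h1 := Finsupp.mem_support_iff.mp hq
          have h2 := hsq q
          simp only [hq, if_true]
          omega
        · simp [hq, Finsupp.notMem_support_iff.mp hq]
      rw [e, e2]
    · rw [Set.Pairwise] at hrook
      push_neg at hrook
      obtain ⟨p, hp, q, hq, hpq, hrc⟩ := hrook
      have hrc' : p.1 = q.1 ∨ p.2 = q.2 := by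
        by_cases h : p.1 = q.1
        · exact Or.inl h
        · exact Or.inr (hrc h)
      have hle : Finsupp.single p 1 + Finsupp.single q 1 ≤ a := by
        intro r
        have hap : 1 ≤ a p := Nat.one_le_iff_ne_zero.mpr (Finsupp.mem_support_iff.mp hp)
        have haq : 1 ≤ a q := Nat.one_le_iff_ne_zero.mpr (Finsupp.mem_support_iff.mp hq)
        simp only [Finsupp.add_apply, Finsupp.single_apply]
        by_cases h1 : p = r
        · subst h1
          have h2 : ¬ q = p := fun h => hpq h.symm
          simp only [h2, if_true, if_false]
          omega
        · by_cases h2 : q = r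
          · subst h2
            simp only [h1, if_true, if_false]
            omega
          · simp [h1, h2]
      rw [Ideal.Quotient.eq_zero_iff_mem.mpr (mono_mem F n p q a hle hrc')]
      exact Submodule.zero_mem _
  · push_neg at hsq
    obtain ⟨p, hp⟩ := hsq
    have hle : Finsupp.single p 1 + Finsupp.single p 1 ≤ a := by
      intro r
      simp only [Finsupp.add_apply, Finsupp.single_apply]
      by_cases h1 : p = r
      · subst h1; simp; omega
      · simp [h1]
    rw [Ideal.Quotient.eq_zero_iff_mem.mpr (mono_mem F n p p a hle (Or.inl rfl))]
    exact Submodule.zero_mem _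

/-- The images of the squarefree monomials m(R), over all non-attacking rook
placements R ⊆ [n]×[n], span the quotient F[x_{n×n}]/I_n. -/
theorem rook_monomials_span (F : Type*) [Field F] (n : ℕ) :
    Submodule.span F
      {y : MvPolynomial (Fin n × Fin n) F ⧸ matIdeal F n |
        ∃ R : Finset (Fin n × Fin n),
          ((R : Set (Fin n × Fin n)).Pairwise fun p q => p.1 ≠ q.1 ∧ p.2 ≠ q.2) ∧
          y = Ideal.Quotient.mk (matIdeal F n) (∏ p ∈ R, X p)} = ⊤ := by
  rw [eq_top_iff]
  rintro y -
  obtain ⟨f, rfl⟩ := Ideal.Quotient.mk_surjective y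
  rw [← Ideal.Quotient.mkₐ_eq_mk F, f.as_sum, map_sum]
  apply Submodule.sum_mem
  intro a _
  have e : (monomial a (coeff a f)) = coeff a f • monomial a (1 : F) := by
    rw [smul_monomial, smul_eq_mul, mul_one]
  rw [e, map_smul, Ideal.Quotient.mkₐ_eq_mk F]
  exact Submodule.smul_mem _ _ (key_mem F n a)
end

section
/- Let F be a field, let I ⊆ F[x_1,...,x_N] be an ideal, and let gr I be the ideal generated by the top-degree homogeneous components τ(f) of all nonzero f ∈ I. If Z ⊆ F^N is finite, then dim_F F[x_1,...,x_N]/gr I(Z) = |Z|. -/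
/-!
Let `V_d ⊆ R = F[x₁, …, x_N]` be the polynomials of total degree `≤ d`. Taking the
degree-`d` homogeneous component maps `V_d ∩ I` and `V_d ∩ gr I` onto the same space, with
kernels `V_{d-1} ∩ I` and `V_{d-1} ∩ gr I`; by induction `dim (V_d ∩ I) = dim (V_d ∩ gr I)`,
so the images of `V_d` in `R ⧸ I` and in `R ⧸ gr I` have the same dimension for every `d`.
These images exhaust both quotients, hence `dim R ⧸ gr I = dim R ⧸ I`. Finally, interpolation
makes evaluation on `Z` a surjection `R → F^Z` with kernel `I(Z)`, so `dim R ⧸ I(Z) = |Z|`.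
-/

open MvPolynomial

/-- The ideal of polynomials vanishing on a set of points Z. -/
noncomputable def vanIdeal {σ : Type*} (F : Type*) [Field F] (Z : Set (σ → F)) :
    Ideal (MvPolynomial σ F) where
  carrier := {f | ∀ x ∈ Z, MvPolynomial.eval x f = 0}
  zero_mem' := by intro x hx; simp
  add_mem' := by intro a b ha hb x hx; simp [ha x hx, hb x hx]
  smul_mem' := by intro c f hf x hx; simp [hf x hx]

/-- The associated graded ideal: generated by the top-degree homogeneous
components of all nonzero elements of I. -/
noncomputable def grIdeal {σ : Type*} {F : Type*} [Field F]
    (I : Ideal (MvPolynomial σ F)) : Ideal (MvPolynomial σ F) :=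
  Ideal.span {g | ∃ f ∈ I, f ≠ 0 ∧
    g = MvPolynomial.homogeneousComponent f.totalDegree f}

open Module

theorem Submodule.finrank_map_add_finrank_inf_ker {F M N : Type*} [Field F] [AddCommGroup M]
    [Module F M] [AddCommGroup N] [Module F N] (W : Submodule F M) [FiniteDimensional F W]
    (φ : M →ₗ[F] N) :
    finrank F (W.map φ) + finrank F ↥(W ⊓ LinearMap.ker φ) = finrank F W := by
  have h := (φ.domRestrict W).finrank_range_add_finrank_ker
  rwa [LinearMap.range_domRestrict, LinearMap.ker_domRestrict,
    (Submodule.equivMapOfInjective _ W.injective_subtype _).finrank_eq,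
    Submodule.map_comap_subtype] at h

/-- When `M` is infinite-dimensional, both sides are `0`: the supremum of an unbounded family
in `ℕ` is `0`. -/
theorem Submodule.finrank_eq_iSup_finrank {F M : Type*} [Field F] [AddCommGroup M] [Module F M]
    {W : ℕ → Submodule F M} (hW : Monotone W) (hW_top : ⨆ d, W d = ⊤)
    [∀ d, FiniteDimensional F (W d)] :
    finrank F M = ⨆ d, finrank F (W d) := by
  by_cases hbdd : BddAbove (Set.range fun d ↦ finrank F (W d))
  · obtain ⟨d₀, hd₀⟩ : ∃ d₀, finrank F (W d₀) = ⨆ d, finrank F (W d) :=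
      Nat.sSup_mem (Set.range_nonempty _) hbdd
    have hle : ∀ d, W d ≤ W d₀ := fun d ↦ (le_total d d₀).elim (fun h ↦ hW h) fun h ↦
      (Submodule.eq_of_le_of_finrank_le (hW h) (hd₀ ▸ le_ciSup hbdd d)).ge
    have htop : W d₀ = ⊤ := eq_top_iff.2 (hW_top ▸ iSup_le hle)
    rw [← finrank_top, ← htop, hd₀]
  · have : ¬FiniteDimensional F M := fun _ ↦
      hbdd ⟨finrank F M, by rintro _ ⟨d, rfl⟩; exact Submodule.finrank_le _⟩
    rw [finrank_of_not_finite this, Nat.iSup_of_not_bddAbove hbdd]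

namespace MvPolynomial

section CommSemiring

variable {σ R : Type*} [CommSemiring R]

section GradedAlgebra

attribute [local instance] MvPolynomial.gradedAlgebra

theorem homogeneousComponent_mul_of_isHomogeneous_left {h : MvPolynomial σ R} {e : ℕ}
    (hh : h.IsHomogeneous e) (g : MvPolynomial σ R) (d : ℕ) :
    homogeneousComponent d (h * g) = if e ≤ d then h * homogeneousComponent (d - e) g else 0 := by
  simp only [← decomposition.decompose'_apply]
  exact DirectSum.coe_decompose_mul_of_left_mem (homogeneousSubmodule σ R) d hh

end GradedAlgebra

theorem homogeneousComponent_totalDegree_ne_zero {f : MvPolynomial σ R} (hf : f ≠ 0) :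
    homogeneousComponent f.totalDegree f ≠ 0 := by
  obtain ⟨s, hs, hdeg⟩ := Finset.exists_mem_eq_sup f.support (support_nonempty.2 hf)
    fun s ↦ s.sum fun _ e ↦ e
  intro h
  have := coeff_homogeneousComponent f.totalDegree f s
  rw [h, coeff_zero, if_pos (by exact hdeg.symm)] at this
  exact mem_support_iff.1 hs this.symm

variable (σ R)

theorem monotone_restrictTotalDegree : Monotone (restrictTotalDegree σ R) :=
  fun _ _ hde _ hf ↦
    (mem_restrictTotalDegree _ _ _).2 (((mem_restrictTotalDegree _ _ _).1 hf).trans hde)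

theorem iSup_restrictTotalDegree : ⨆ d, restrictTotalDegree σ R d = ⊤ :=
  eq_top_iff.2 fun f _ ↦
    Submodule.mem_iSup_of_mem f.totalDegree ((mem_restrictTotalDegree _ _ _).2 le_rfl)

theorem restrictTotalDegree_inf_ker_homogeneousComponent_zero :
    restrictTotalDegree σ R 0 ⊓ LinearMap.ker (homogeneousComponent 0) = ⊥ := by
  refine eq_bot_iff.2 fun f ⟨hf, hker⟩ ↦ ?_
  by_contra hne
  rw [SetLike.mem_coe, mem_restrictTotalDegree, Nat.le_zero] at hf
  exact homogeneousComponent_totalDegree_ne_zero hne (hf ▸ hker)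

theorem restrictTotalDegree_succ_inf_ker_homogeneousComponent (d : ℕ) :
    restrictTotalDegree σ R (d + 1) ⊓ LinearMap.ker (homogeneousComponent (d + 1)) =
      restrictTotalDegree σ R d := by
  ext f
  simp only [Submodule.mem_inf, mem_restrictTotalDegree, LinearMap.mem_ker]
  refine ⟨fun ⟨hle, hker⟩ ↦ ?_,
    fun h ↦ ⟨h.trans d.le_succ, homogeneousComponent_eq_zero _ _ (by omega)⟩⟩
  by_contra hlt
  have hf : f ≠ 0 := by rintro rfl; simp at hlt
  exact homogeneousComponent_totalDegree_ne_zero hf (by rwa [show f.totalDegree = d + 1 by omega])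

end CommSemiring

section Field

variable {σ F : Type*} [Field F]

section grIdeal

variable (I : Ideal (MvPolynomial σ F))

theorem homogeneousComponent_mem_map_of_mem_grIdeal {g : MvPolynomial σ F} (hg : g ∈ grIdeal I)
    (d : ℕ) :
    homogeneousComponent d g ∈
      (restrictTotalDegree σ F d ⊓ I.restrictScalars F).map (homogeneousComponent d) := by
  induction hg using Submodule.span_induction generalizing d with
  | mem g hg =>
    obtain ⟨f, hfI, -, rfl⟩ := hg
    rw [homogeneousComponent_of_mem (homogeneousComponent_mem _ f)]
    split_ifs with hd
    · subst hd
      exact ⟨f, ⟨(mem_restrictTotalDegree _ _ _).2 le_rfl, hfI⟩, rfl⟩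
    · exact zero_mem _
  | zero => simp
  | add g₁ g₂ _ _ ih₁ ih₂ => simpa only [map_add] using add_mem (ih₁ d) (ih₂ d)
  | smul r g _ ih =>
    rw [smul_eq_mul, ← sum_homogeneousComponent r, Finset.sum_mul, map_sum]
    refine sum_mem fun i _ ↦ ?_
    have hri := homogeneousComponent_isHomogeneous i r
    rw [homogeneousComponent_mul_of_isHomogeneous_left hri]
    split_ifs with hid
    · obtain ⟨f, ⟨hfV, hfI⟩, hf⟩ := ih (d - i)
      refine ⟨homogeneousComponent i r * f, ⟨?_, I.mul_mem_left _ hfI⟩, ?_⟩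
      · rw [SetLike.mem_coe, mem_restrictTotalDegree] at hfV ⊢
        have := hri.totalDegree_le
        exact (totalDegree_mul _ _).trans (by omega)
      · rw [homogeneousComponent_mul_of_isHomogeneous_left hri, if_pos hid, hf]
    · exact zero_mem _

theorem map_homogeneousComponent_inf_grIdeal (d : ℕ) :
    (restrictTotalDegree σ F d ⊓ (grIdeal I).restrictScalars F).map (homogeneousComponent d) =
      (restrictTotalDegree σ F d ⊓ I.restrictScalars F).map (homogeneousComponent d) := by
  refine le_antisymm (Submodule.map_le_iff_le_comap.2 fun g ⟨_, hg⟩ ↦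
    homogeneousComponent_mem_map_of_mem_grIdeal I hg d) ?_
  rintro _ ⟨f, ⟨hfV, hfI⟩, rfl⟩
  by_cases h : homogeneousComponent d f = 0
  · rw [h]
    exact zero_mem _
  have hdeg : f.totalDegree = d := by
    rw [SetLike.mem_coe, mem_restrictTotalDegree] at hfV
    by_contra hne
    exact h (homogeneousComponent_eq_zero _ _ (by omega))
  refine ⟨homogeneousComponent d f, ⟨?_, ?_⟩, ?_⟩
  · exact (mem_restrictTotalDegree _ _ _).2 (homogeneousComponent_isHomogeneous d f).totalDegree_le
  · exact Ideal.subset_span ⟨f, hfI, by rintro rfl; simp at h, by rw [hdeg]⟩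
  · exact homogeneousComponent_eq_self (homogeneousComponent_isHomogeneous d f)

variable [Finite σ]

theorem finrank_restrictTotalDegree_inf_grIdeal (d : ℕ) :
    finrank F ↥(restrictTotalDegree σ F d ⊓ (grIdeal I).restrictScalars F) =
      finrank F ↥(restrictTotalDegree σ F d ⊓ I.restrictScalars F) := by
  have rank_nullity (J : Ideal (MvPolynomial σ F)) (d : ℕ) :=
    (restrictTotalDegree σ F d ⊓ J.restrictScalars F).finrank_map_add_finrank_inf_ker
      (homogeneousComponent d)
  induction d with
  | zero =>
    have h := rank_nullity I 0
    have h' := rank_nullity (grIdeal I) 0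
    rw [inf_right_comm, restrictTotalDegree_inf_ker_homogeneousComponent_zero, bot_inf_eq] at h h'
    rw [← h, ← h', map_homogeneousComponent_inf_grIdeal]
  | succ d ih =>
    have h := rank_nullity I (d + 1)
    have h' := rank_nullity (grIdeal I) (d + 1)
    rw [inf_right_comm, restrictTotalDegree_succ_inf_ker_homogeneousComponent] at h h'
    rw [map_homogeneousComponent_inf_grIdeal] at h'
    omega

theorem finrank_map_restrictTotalDegree_mkQ_grIdeal (d : ℕ) :
    finrank F ((restrictTotalDegree σ F d).map ((grIdeal I).restrictScalars F).mkQ) =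
      finrank F ((restrictTotalDegree σ F d).map (I.restrictScalars F).mkQ) := by
  have h := (restrictTotalDegree σ F d).finrank_map_add_finrank_inf_ker (I.restrictScalars F).mkQ
  have h' := (restrictTotalDegree σ F d).finrank_map_add_finrank_inf_ker
    ((grIdeal I).restrictScalars F).mkQ
  rw [Submodule.ker_mkQ] at h h'
  have := finrank_restrictTotalDegree_inf_grIdeal I d
  omega

theorem finrank_quotient_grIdeal_eq :
    finrank F (MvPolynomial σ F ⧸ grIdeal I) = finrank F (MvPolynomial σ F ⧸ I) := by
  have finrank_eq_iSup (J : Ideal (MvPolynomial σ F)) :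
      finrank F (MvPolynomial σ F ⧸ J) =
        ⨆ d, finrank F ((restrictTotalDegree σ F d).map (J.restrictScalars F).mkQ) := by
    rw [← (Submodule.Quotient.restrictScalarsEquiv F J).finrank_eq]
    refine Submodule.finrank_eq_iSup_finrank
      (fun _ _ h ↦ Submodule.map_mono (monotone_restrictTotalDegree σ F h)) ?_
    rw [← Submodule.map_iSup, iSup_restrictTotalDegree, Submodule.map_top, Submodule.range_mkQ]
  simp only [finrank_eq_iSup, finrank_map_restrictTotalDegree_mkQ_grIdeal]

end grIdeal

section vanIdeal

theorem exists_eval_eq_one_eval_eq_zero {z w : σ → F} (h : z ≠ w) :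
    ∃ p : MvPolynomial σ F, eval z p = 1 ∧ eval w p = 0 := by
  obtain ⟨i, hi⟩ := Function.ne_iff.1 h
  refine ⟨C (z i - w i)⁻¹ * (X i - C (w i)), ?_, by simp⟩
  simpa using inv_mul_cancel₀ (sub_ne_zero.2 hi)

theorem exists_eval_eq_one_forall_eval_eq_zero {Z : Set (σ → F)} (hZ : Z.Finite) {z : σ → F}
    (hz : z ∉ Z) : ∃ p : MvPolynomial σ F, eval z p = 1 ∧ ∀ w ∈ Z, eval w p = 0 := by
  choose! q hq₁ hq₀ using fun w (hw : w ∈ Z) ↦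
    exists_eval_eq_one_eval_eq_zero (ne_of_mem_of_not_mem hw hz).symm
  refine ⟨∏ w ∈ hZ.toFinset, q w, ?_, fun w hw ↦ ?_⟩
  · rw [map_prod]
    exact Finset.prod_eq_one fun w hw ↦ hq₁ w (hZ.mem_toFinset.1 hw)
  · rw [map_prod]
    exact Finset.prod_eq_zero (hZ.mem_toFinset.2 hw) (hq₀ w hw)

noncomputable def evalOn (Z : Set (σ → F)) : MvPolynomial σ F →ₐ[F] (Z → F) :=
  AlgHom.pi fun z ↦ aeval z.1

theorem evalOn_apply (Z : Set (σ → F)) (f : MvPolynomial σ F) (z : Z) :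
    evalOn Z f z = eval z.1 f :=
  rfl

theorem ker_evalOn (Z : Set (σ → F)) : RingHom.ker (evalOn Z) = vanIdeal F Z := by
  ext f
  rw [RingHom.mem_ker]
  refine ⟨fun h x hx ↦ congrFun h ⟨x, hx⟩, fun h ↦ ?_⟩
  funext z
  exact h z.1 z.2

theorem evalOn_surjective {Z : Set (σ → F)} (hZ : Z.Finite) :
    Function.Surjective (evalOn Z) := by
  have := hZ.fintype
  choose δ hδ₁ hδ₀ using fun z : Z ↦
    exists_eval_eq_one_forall_eval_eq_zero (hZ.sdiff (t := {z.1})) (fun h ↦ h.2 rfl)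
  refine fun v ↦ ⟨∑ z, v z • δ z, ?_⟩
  funext w
  rw [evalOn_apply, map_sum, Finset.sum_eq_single w]
  · simp [hδ₁]
  · intro z _ hzw
    rw [smul_eval, hδ₀ z w ⟨w.2, fun h ↦ hzw (Subtype.ext h).symm⟩, mul_zero]
  · simp

theorem finrank_quotient_vanIdeal {Z : Set (σ → F)} (hZ : Z.Finite) :
    finrank F (MvPolynomial σ F ⧸ vanIdeal F Z) = Nat.card Z := by
  have := hZ.fintype
  rw [← ker_evalOn,
    (Ideal.quotientKerAlgEquivOfSurjective (evalOn_surjective hZ)).toLinearEquiv.finrank_eq,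
    finrank_fintype_fun_eq_card, Nat.card_eq_fintype_card]

end vanIdeal

end Field

end MvPolynomial

/-- For a finite locus Z ⊆ F^N, the quotient by the associated graded ideal of the
vanishing ideal of Z has dimension |Z|. -/
theorem finrank_quotient_grIdeal (F : Type*) [Field F] (N : ℕ)
    (Z : Set (Fin N → F)) (hZ : Z.Finite) :
    Module.finrank F (MvPolynomial (Fin N) F ⧸ grIdeal (vanIdeal F Z)) = Nat.card Z := by
  rw [finrank_quotient_grIdeal_eq, finrank_quotient_vanIdeal hZ]
end

section
/- Let F be a field, I ⊆ F[x_1,...,x_N] an ideal, and d ≥ 0. Suppose B is a finite set of homogeneous polynomials of degree at most d whose images form a basis of the degree-≤-d part of F[x]/gr I. Then the images of B form a basis of the quotient F[x]_{≤d} / (I ∩ F[x]_{≤d}). -/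
open MvPolynomial

/-- The submodule `I ∩ F[x]_{≤ d}` of the space `F[x]_{≤ d}` of polynomials
of total degree at most `d`. -/
noncomputable def interSub (F : Type*) [Field F] (N : ℕ)
    (I : Ideal (MvPolynomial (Fin N) F)) (d : ℕ) :
    Submodule F (restrictTotalDegree (Fin N) F d) :=
  (Submodule.restrictScalars F I).comap (restrictTotalDegree (Fin N) F d).subtype

namespace BTA
variable {σ F : Type*} [Field F]

lemma top_ne_zero {f : MvPolynomial σ F} (hf : f ≠ 0) :
    homogeneousComponent f.totalDegree f ≠ 0 := by
  obtain ⟨m, hm, hdm⟩ := Finset.exists_mem_eq_sup f.support (support_nonempty.mpr hf)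
    (fun s => s.sum fun _ e => e)
  intro h
  have hc : coeff m (homogeneousComponent f.totalDegree f) = coeff m f := by
    rw [coeff_homogeneousComponent, if_pos]
    show Finsupp.degree m = _
    rw [Finsupp.degree, totalDegree, hdm]
    rfl
  rw [h, coeff_zero] at hc
  exact (mem_support_iff.mp hm) hc.symm

lemma hom_mul_tau {p f : MvPolynomial σ F} {i : ℕ} (hp : p.IsHomogeneous i) (hp0 : p ≠ 0)
    (hf : f ≠ 0) :
    (p * f) ≠ 0 ∧ (p * f).totalDegree = i + f.totalDegree ∧
    homogeneousComponent (i + f.totalDegree) (p * f) =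
      p * homogeneousComponent f.totalDegree f := by
  set D := f.totalDegree with hD
  have hcomp : homogeneousComponent (i + D) (p * f) = p * homogeneousComponent D f := by
    conv_lhs => rw [← sum_homogeneousComponent f, Finset.mul_sum, map_sum]
    rw [Finset.sum_eq_single D]
    · have := homogeneousComponent_of_mem (m := i + D)
        ((mem_homogeneousSubmodule _ _).mpr (hp.mul (homogeneousComponent_isHomogeneous D f)))
      rw [this, if_pos rfl]
    · intro j _ hj
      have := homogeneousComponent_of_mem (m := i + D)
        ((mem_homogeneousSubmodule _ _).mpr (hp.mul (homogeneousComponent_isHomogeneous j f)))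
      rw [this, if_neg (by omega)]
    · intro hD'
      exact absurd (Finset.self_mem_range_succ D) hD'
  have hne : p * homogeneousComponent D f ≠ 0 := mul_ne_zero hp0 (top_ne_zero hf)
  have hdeg : (p * f).totalDegree = i + D := by
    refine le_antisymm ((totalDegree_mul p f).trans (add_le_add hp.totalDegree_le le_rfl)) ?_
    by_contra hlt
    push_neg at hlt
    exact hne (hcomp ▸ homogeneousComponent_eq_zero _ _ hlt)
  exact ⟨fun h0 => hne (by rw [← hcomp, h0, map_zero]), hdeg, hcomp⟩

def tauSet (I : Ideal (MvPolynomial σ F)) : Set (MvPolynomial σ F) :=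
  {g | ∃ f ∈ I, f ≠ 0 ∧ g = MvPolynomial.homogeneousComponent f.totalDegree f}

lemma mul_mem_span {I : Ideal (MvPolynomial σ F)} (r x : MvPolynomial σ F)
    (hx : x ∈ Submodule.span F (tauSet I)) : r * x ∈ Submodule.span F (tauSet I) := by
  induction hx using Submodule.span_induction with
  | zero => rw [mul_zero]; exact Submodule.zero_mem _
  | add a b _ _ ha hb => rw [mul_add]; exact Submodule.add_mem _ ha hb
  | smul c a _ ha => rw [mul_smul_comm]; exact Submodule.smul_mem _ _ ha
  | mem g hg =>
    obtain ⟨f, hfI, hf0, rfl⟩ := hg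
    -- r * τ(f) = ∑ over homogeneous components of r
    rw [show r = ∑ i ∈ Finset.range (r.totalDegree + 1), homogeneousComponent i r from
      (sum_homogeneousComponent r).symm, Finset.sum_mul]
    refine Submodule.sum_mem _ fun i _ => ?_
    by_cases hpi : homogeneousComponent i r = 0
    · rw [hpi, zero_mul]; exact Submodule.zero_mem _
    · obtain ⟨hne, hdeg, hcomp⟩ :=
        hom_mul_tau (homogeneousComponent_isHomogeneous i r) hpi hf0
      refine Submodule.subset_span ⟨homogeneousComponent i r * f,
        Ideal.mul_mem_left _ _ hfI, hne, ?_⟩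
      rw [hdeg, hcomp]

lemma mem_span_tauSet {I : Ideal (MvPolynomial σ F)} {g : MvPolynomial σ F}
    (hg : g ∈ _root_.grIdeal I) : g ∈ Submodule.span F (tauSet I) := by
  induction hg using Submodule.span_induction with
  | zero => exact Submodule.zero_mem _
  | add a b _ _ ha hb => exact Submodule.add_mem _ ha hb
  | smul r a _ ha => exact mul_mem_span r a ha
  | mem g hg => exact Submodule.subset_span hg

lemma grIdeal_component {I : Ideal (MvPolynomial σ F)} {g : MvPolynomial σ F}
    (hg : g ∈ _root_.grIdeal I) (e : ℕ) :
    ∃ f ∈ I, f.totalDegree ≤ e ∧ homogeneousComponent e f = homogeneousComponent e g := by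
  have hg2 := mem_span_tauSet hg
  clear hg
  induction hg2 using Submodule.span_induction with
  | zero => exact ⟨0, Submodule.zero_mem _, by simp⟩
  | add a b _ _ ha hb =>
    obtain ⟨f1, h1, hd1, hc1⟩ := ha
    obtain ⟨f2, h2, hd2, hc2⟩ := hb
    exact ⟨f1 + f2, Ideal.add_mem _ h1 h2,
      (totalDegree_add _ _).trans (max_le hd1 hd2), by rw [map_add, map_add, hc1, hc2]⟩
  | smul c a _ ha =>
    obtain ⟨f, h1, hd1, hc1⟩ := ha
    refine ⟨c • f, ?_, ?_, by rw [map_smul, map_smul, hc1]⟩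
    · rw [smul_eq_C_mul]; exact Ideal.mul_mem_left _ _ h1
    · exact (totalDegree_smul_le _ _).trans hd1
  | mem a ha =>
    obtain ⟨f, hfI, hf0, rfl⟩ := ha
    by_cases he : e = f.totalDegree
    · subst he
      refine ⟨f, hfI, le_rfl, ?_⟩
      rw [homogeneousComponent_of_mem (homogeneousComponent_mem _ _), if_pos rfl]
    · refine ⟨0, Submodule.zero_mem _, by simp, ?_⟩
      rw [map_zero, homogeneousComponent_of_mem (homogeneousComponent_mem _ _), if_neg he]

lemma hom_comp_cases {b : MvPolynomial σ F} {m : ℕ} (hm : b.IsHomogeneous m) (j : ℕ) :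
    homogeneousComponent j b = b ∨ homogeneousComponent j b = 0 := by
  rw [homogeneousComponent_of_mem ((mem_homogeneousSubmodule _ _).mpr hm)]
  split
  exacts [Or.inl rfl, Or.inr rfl]

lemma hom_comp_ne {b : MvPolynomial σ F} {m : ℕ} (hm : b.IsHomogeneous m) {i j : ℕ}
    (hij : i ≠ j) (hi : homogeneousComponent i b = b) : homogeneousComponent j b = 0 := by
  by_cases hb : b = 0
  · rw [hb, map_zero]
  rw [homogeneousComponent_of_mem ((mem_homogeneousSubmodule _ _).mpr hm)] at hi ⊢
  rcases eq_or_ne i m with h1 | h1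
  · rw [if_neg (h1 ▸ (Ne.symm hij))]
  · rw [if_neg h1] at hi
    exact absurd hi.symm hb

lemma ind_aux {N : ℕ} {I : Ideal (MvPolynomial (Fin N) F)}
    (B : Finset (MvPolynomial (Fin N) F))
    (hhom : ∀ b ∈ B, ∃ m, MvPolynomial.IsHomogeneous b m)
    (hind : LinearIndependent F fun b : B => Ideal.Quotient.mk (_root_.grIdeal I) b.1)
    (c : B → F) (hmem : (∑ b : B, c b • b.1) ∈ I) : ∀ b, c b = 0 := by
  classical
  have hind' := Fintype.linearIndependent_iff.mp hind
  have mkl : ∀ (g : MvPolynomial (Fin N) F), Ideal.Quotient.mk (_root_.grIdeal I) g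
      = (Ideal.Quotient.mkₐ F (_root_.grIdeal I)).toLinearMap g := fun g => rfl
  set f := ∑ b : B, c b • b.1 with hf
  by_cases hf0 : f = 0
  · apply hind'
    have h2 : (Ideal.Quotient.mkₐ F (_root_.grIdeal I)).toLinearMap f = 0 := by rw [hf0, map_zero]
    rw [hf, map_sum] at h2
    simp only [map_smul] at h2
    simpa only [← mkl] using h2
  · exfalso
    have htau : homogeneousComponent f.totalDegree f ∈ _root_.grIdeal I :=
      Ideal.subset_span ⟨f, hmem, hf0, rfl⟩
    set D := f.totalDegree with hD
    set c' : B → F := fun b => if homogeneousComponent D b.1 = b.1 then c b else 0 with hc'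
    have hterm : ∀ b : B, c b • homogeneousComponent D b.1 = c' b • b.1 := by
      intro b
      by_cases h : homogeneousComponent D b.1 = b.1
      · rw [h]; simp [hc', h]
      · obtain ⟨m, hm⟩ := hhom b.1 b.2
        rcases hom_comp_cases hm D with h1 | h1
        · exact absurd h1 h
        · rw [h1, smul_zero, hc']
          simp [h]
    have hsum : homogeneousComponent D f = ∑ b : B, c' b • b.1 := by
      rw [hf, map_sum]
      exact Finset.sum_congr rfl fun b _ => by rw [map_smul]; exact hterm b
    have hzero : ∀ b, c' b = 0 := by
      apply hind'
      have h2 : Ideal.Quotient.mk (_root_.grIdeal I) (homogeneousComponent D f) = 0 :=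
        Ideal.Quotient.eq_zero_iff_mem.mpr htau
      rw [hsum, mkl, map_sum] at h2
      simp only [map_smul] at h2
      simpa only [← mkl] using h2
    have hzf : homogeneousComponent D f = 0 := by
      rw [hsum]
      exact Finset.sum_eq_zero fun b _ => by rw [hzero b, zero_smul]
    exact top_ne_zero hf0 hzf

lemma span_aux {N : ℕ} {I : Ideal (MvPolynomial (Fin N) F)} {d : ℕ}
    (B : Finset (MvPolynomial (Fin N) F))
    (hhom : ∀ b ∈ B, ∃ m, MvPolynomial.IsHomogeneous b m)
    (hspan : Submodule.span F ((Ideal.Quotient.mk (_root_.grIdeal I)) '' B) =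
      Submodule.map (Ideal.Quotient.mkₐ F (_root_.grIdeal I)).toLinearMap
        (restrictTotalDegree (Fin N) F d)) :
    ∀ (p : MvPolynomial (Fin N) F), p.totalDegree ≤ d →
      ∃ (c : B → F) (f : MvPolynomial (Fin N) F), f ∈ I ∧ f.totalDegree ≤ d ∧
        p = (∑ b : B, c b • b.1) + f := by
  classical
  have mkl : ∀ (g : MvPolynomial (Fin N) F), Ideal.Quotient.mk (_root_.grIdeal I) g
      = (Ideal.Quotient.mkₐ F (_root_.grIdeal I)).toLinearMap g := fun g => rfl
  suffices H : ∀ n (p : MvPolynomial (Fin N) F), p.totalDegree ≤ d → p.totalDegree ≤ n →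
      ∃ (c : B → F) (f : MvPolynomial (Fin N) F), f ∈ I ∧ f.totalDegree ≤ d ∧
        p = (∑ b : B, c b • b.1) + f from
    fun p hp => H p.totalDegree p hp le_rfl
  intro n
  induction n using Nat.strong_induction_on with
  | _ n IH =>
    intro p hpd hpn
    by_cases hp0 : p = 0
    · exact ⟨0, 0, Submodule.zero_mem _, by simp, by simp [hp0]⟩
    set e := p.totalDegree with he
    have hmk : Ideal.Quotient.mk (_root_.grIdeal I) p ∈
        Submodule.span F ((Ideal.Quotient.mk (_root_.grIdeal I)) '' B) := by
      rw [hspan]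
      exact Submodule.mem_map.mpr ⟨p, (mem_restrictTotalDegree _ _ _).mpr hpd, rfl⟩
    rw [show (Ideal.Quotient.mk (_root_.grIdeal I)) '' (B : Set _) =
        Set.range (fun b : B => Ideal.Quotient.mk (_root_.grIdeal I) b.1) from
      Set.image_eq_range _ _, Submodule.mem_span_range_iff_exists_fun] at hmk
    obtain ⟨c, hc⟩ := hmk
    have hg : p - ∑ b : B, c b • b.1 ∈ _root_.grIdeal I := by
      have h2 : Ideal.Quotient.mk (_root_.grIdeal I) (p - ∑ b : B, c b • b.1) = 0 := by
        rw [mkl, map_sub, map_sum]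
        simp only [map_smul]
        simp only [← mkl]
        rw [hc, sub_self]
      exact Ideal.Quotient.eq_zero_iff_mem.mp h2
    obtain ⟨f, hfI, hfd, hfc⟩ := grIdeal_component hg e
    set c' : B → F := fun b => if homogeneousComponent e b.1 = b.1 then c b else 0 with hc'def
    set q := p - (∑ b : B, c' b • b.1) - f with hq
    have hcomps : ∀ j, e ≤ j → homogeneousComponent j q = 0 := by
      intro j hj
      rcases eq_or_lt_of_le hj with heq | hlt
      · -- j = e
        subst heq
        have hSS : ∑ b : B, c' b • homogeneousComponent e b.1 =
            ∑ b : B, c b • homogeneousComponent e b.1 := by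
          refine Finset.sum_congr rfl fun b _ => ?_
          by_cases h : homogeneousComponent e b.1 = b.1
          · simp [hc'def, h]
          · obtain ⟨m, hm⟩ := hhom b.1 b.2
            rcases hom_comp_cases hm e with h1 | h1
            · exact absurd h1 h
            · rw [h1, smul_zero, smul_zero]
        rw [hq, map_sub, map_sub, hfc, map_sub, map_sum, map_sum]
        simp only [map_smul]
        rw [hSS]
        ring
      · -- j > e
        have h1 : homogeneousComponent j p = 0 := homogeneousComponent_eq_zero _ _ hlt
        have h2 : homogeneousComponent j f = 0 :=
          homogeneousComponent_eq_zero _ _ (lt_of_le_of_lt hfd hlt)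
        have h3 : ∀ b : B, b ∈ Finset.univ → homogeneousComponent j (c' b • b.1) = 0 := by
          intro b _
          rw [map_smul]
          by_cases h : homogeneousComponent e b.1 = b.1
          · obtain ⟨m, hm⟩ := hhom b.1 b.2
            rw [hom_comp_ne hm (ne_of_lt hlt) h, smul_zero]
          · simp [hc'def, if_neg h]
        rw [hq, map_sub, map_sub, map_sum, h1, h2, Finset.sum_eq_zero h3]
        simp
    by_cases hq0 : q = 0
    · have h0 : p - ((∑ b : B, c' b • b.1) + f) = 0 := by
        rw [← sub_sub, ← hq]; exact hq0
      exact ⟨c', f, hfI, hfd.trans hpd, sub_eq_zero.mp h0⟩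
    · have hqe : q.totalDegree < e := by
        by_contra hle
        push_neg at hle
        exact top_ne_zero hq0 (hcomps _ hle)
      obtain ⟨c2, f2, hf2I, hf2d, hq_eq⟩ :=
        IH q.totalDegree (lt_of_lt_of_le hqe hpn) q (hqe.le.trans hpd) le_rfl
      refine ⟨fun b => c' b + c2 b, f + f2, Ideal.add_mem _ hfI hf2I,
        (totalDegree_add _ _).trans (max_le (hfd.trans hpd) hf2d), ?_⟩
      have hp_eq : p = (∑ b : B, c' b • b.1) + f + q := by rw [hq]; ring
      rw [hp_eq, hq_eq]
      simp only [add_smul, Finset.sum_add_distrib]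
      ring

end BTA

/-- If a family B of homogeneous polynomials of degree ≤ d descends to a basis of
the degree-≤-d part of F[x]/gr I, then B descends to a basis of
F[x]_{≤d} / (I ∩ F[x]_{≤d}). -/
theorem basis_transfer (F : Type*) [Field F] (N : ℕ)
    (I : Ideal (MvPolynomial (Fin N) F)) (d : ℕ)
    (B : Finset (MvPolynomial (Fin N) F))
    (hhom : ∀ b ∈ B, ∃ m, MvPolynomial.IsHomogeneous b m)
    (hdeg : ∀ b ∈ B, b ∈ restrictTotalDegree (Fin N) F d)
    (hind : LinearIndependent F fun b : B => Ideal.Quotient.mk (grIdeal I) b.1)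
    (hspan : Submodule.span F ((Ideal.Quotient.mk (grIdeal I)) '' B) =
      Submodule.map (Ideal.Quotient.mkₐ F (grIdeal I)).toLinearMap
        (restrictTotalDegree (Fin N) F d)) :
    LinearIndependent F (fun b : B =>
      Submodule.Quotient.mk (p := interSub F N I d) ⟨b.1, hdeg b.1 b.2⟩) ∧
    Submodule.span F (Set.range fun b : B =>
      Submodule.Quotient.mk (p := interSub F N I d) ⟨b.1, hdeg b.1 b.2⟩) = ⊤ := by
  classical
  have key : ∀ (v : restrictTotalDegree (Fin N) F d),
      Submodule.Quotient.mk (p := interSub F N I d) v =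
        Submodule.mkQ (interSub F N I d) v := fun v => rfl
  constructor
  · rw [Fintype.linearIndependent_iff]
    intro c hc
    have hmk : Submodule.mkQ (interSub F N I d)
        (∑ b : B, c b • (⟨b.1, hdeg b.1 b.2⟩ : restrictTotalDegree (Fin N) F d)) = 0 := by
      rw [map_sum]
      simp only [map_smul]
      simp only [← key]
      exact hc
    rw [Submodule.mkQ_apply, Submodule.Quotient.mk_eq_zero] at hmk
    have hmem : (∑ b : B, c b • b.1) ∈ I := by
      have h2 := Submodule.mem_comap.mp hmk
      simpa using h2
    exact BTA.ind_aux B hhom hind c hmem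
  · rw [eq_top_iff]
    rintro x -
    obtain ⟨v, rfl⟩ := Submodule.Quotient.mk_surjective _ x
    obtain ⟨c, f, hfI, hfd, hveq⟩ := BTA.span_aux B hhom hspan v.1
      ((mem_restrictTotalDegree _ _ _).mp v.2)
    set vf : restrictTotalDegree (Fin N) F d := ⟨f, (mem_restrictTotalDegree _ _ _).mpr hfd⟩
      with hvf
    have hv : v = (∑ b : B, c b • (⟨b.1, hdeg b.1 b.2⟩ :
        restrictTotalDegree (Fin N) F d)) + vf := by
      apply Subtype.ext
      simpa using hveq
    have hvfmem : vf ∈ interSub F N I d := hfI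
    rw [hv, Submodule.Quotient.mk_add, (Submodule.Quotient.mk_eq_zero _).mpr hvfmem, add_zero]
    rw [key, map_sum]
    simp only [map_smul]
    refine Submodule.sum_mem _ fun b _ => Submodule.smul_mem _ _ (Submodule.subset_span ?_)
    exact ⟨b, rfl⟩
end

section
/- Let w ∈ S_n and suppose that under the Schensted (RSK) correspondence w maps to a pair of standard Young tableaux of shape λ ⊢ n. Then λ_1, the length of the first row of λ, equals the length of the longest increasing subsequence of w. -/
/-- Schensted row insertion: insert x into a row, bumping the leftmost entry
greater than x (if any). Returns the new row and the bumped entry. -/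
def rowInsert : List ℕ → ℕ → List ℕ × Option ℕ
  | [], x => ([x], none)
  | y :: ys, x =>
    if x < y then (x :: ys, some y)
    else
      let p := rowInsert ys x
      (y :: p.1, p.2)

/-- Schensted insertion of a letter into a tableau (a list of rows). -/
def insertTableau : List (List ℕ) → ℕ → List (List ℕ)
  | [], x => [[x]]
  | r :: rs, x =>
    match rowInsert r x with
    | (r', none) => r' :: rs
    | (r', some y) => r' :: insertTableau rs y

/-- The Schensted insertion tableau P(w) of a word. -/
def pTableau (l : List ℕ) : List (List ℕ) := l.foldl insertTableau []

def insRow (r : List ℕ) (x : ℕ) : List ℕ := (rowInsert r x).1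

lemma rowInsert_spec (r : List ℕ) (x : ℕ) :
    rowInsert r x =
      if h : (r.takeWhile (· ≤ x)).length < r.length then
        (r.set (r.takeWhile (· ≤ x)).length x, some (r.get ⟨_, h⟩))
      else (r ++ [x], none) := by
  induction r with
  | nil => simp [rowInsert]
  | cons y ys ih =>
    by_cases hxy : x < y
    · have : ¬ (y ≤ x) := by omega
      simp [rowInsert, hxy, List.takeWhile, this]
    · have hyx : y ≤ x := by omega
      simp only [rowInsert, if_neg hxy, List.takeWhile, decide_eq_true_eq, hyx, if_pos,
        List.length_cons, ih]
      by_cases h : (ys.takeWhile (· ≤ x)).length < ys.length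
      · rw [dif_pos h, dif_pos (by simpa using Nat.succ_lt_succ h)]
        simp [List.set]
      · rw [dif_neg h, dif_neg (by simpa using fun hh => h hh)]
        simp

abbrev jdx (r : List ℕ) (x : ℕ) : ℕ := (r.takeWhile (· ≤ x)).length

lemma jdx_le (r : List ℕ) (x : ℕ) : jdx r x ≤ r.length :=
  (r.takeWhile_prefix _).length_le

lemma jdx_cons_pos {y x : ℕ} (ys : List ℕ) (h : y ≤ x) :
    jdx (y :: ys) x = jdx ys x + 1 := by
  simp [jdx, List.takeWhile_cons, h]

lemma jdx_cons_neg {y x : ℕ} (ys : List ℕ) (h : ¬ y ≤ x) :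
    jdx (y :: ys) x = 0 := by
  simp [jdx, List.takeWhile_cons, h]

lemma getElem_lt_jdx (r : List ℕ) (x : ℕ) (i : ℕ) (h : i < jdx r x) :
    r[i]'(lt_of_lt_of_le h (jdx_le r x)) ≤ x := by
  induction r generalizing i with
  | nil => simp [jdx] at h
  | cons y ys ih =>
    by_cases hy : y ≤ x
    · rw [jdx_cons_pos ys hy] at h
      cases i with
      | zero => simpa
      | succ i => exact ih i (by omega)
    · rw [jdx_cons_neg ys hy] at h; omega

lemma jdx_getElem (r : List ℕ) (x : ℕ) (h : jdx r x < r.length) :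
    x < r[jdx r x] := by
  induction r with
  | nil => simp at h
  | cons y ys ih =>
    by_cases hy : y ≤ x
    · have e := jdx_cons_pos (x := x) ys hy
      rw [e] at h
      simp only [e, List.getElem_cons_succ]
      exact ih (by simpa using h)
    · simp only [jdx_cons_neg ys hy, List.getElem_cons_zero]
      omega

lemma insRow_eq (r : List ℕ) (x : ℕ) :
    insRow r x = if jdx r x < r.length then r.set (jdx r x) x else r ++ [x] := by
  rw [insRow, rowInsert_spec]
  split_ifs with h <;> simp [h]

lemma length_insRow (r : List ℕ) (x : ℕ) :
    (insRow r x).length = max r.length (jdx r x + 1) := by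
  rw [insRow_eq]
  split_ifs with h
  · rw [Nat.max_eq_left (by omega)]; simp
  · have hj : jdx r x = r.length := le_antisymm (jdx_le r x) (not_lt.1 h)
    rw [Nat.max_eq_right (by omega)]; simp [hj]

lemma getElem_insRow (r : List ℕ) (x : ℕ) (i : ℕ) (hi : i < (insRow r x).length) :
    (insRow r x)[i] = if h2 : i = jdx r x then x else r[i]'(by
      rw [length_insRow] at hi
      have hj := jdx_le r x
      rcases Nat.lt_or_ge i r.length with h | h
      · exact h
      · exfalso
        rcases lt_max_iff.1 hi with h' | h' <;> omega) := by
  by_cases h : jdx r x < r.length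
  · simp only [insRow_eq, if_pos h] at hi ⊢
    rw [List.getElem_set]
    by_cases h2 : i = jdx r x
    · simp [h2]
    · rw [if_neg (fun hh => h2 hh.symm), dif_neg h2]
  · have hj : jdx r x = r.length := le_antisymm (jdx_le r x) (not_lt.1 h)
    simp only [insRow_eq, if_neg h] at hi ⊢
    by_cases h2 : i = jdx r x
    · rw [dif_pos h2, List.getElem_append_right (by omega)]
      simp [h2, hj]
    · rw [dif_neg h2, List.getElem_append_left]

lemma sorted_getElem_le {r : List ℕ} (hs : r.Pairwise (· ≤ ·)) {i j : ℕ}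
    (hij : i ≤ j) (hj : j < r.length) : r[i]'(lt_of_le_of_lt hij hj) ≤ r[j] :=
  hs.rel_get_of_le (a := ⟨i, lt_of_le_of_lt hij hj⟩) (b := ⟨j, hj⟩) hij

lemma jdx_iff {r : List ℕ} (hs : r.Pairwise (· ≤ ·)) {x i : ℕ} (hi : i < r.length) :
    r[i] ≤ x ↔ i < jdx r x := by
  constructor
  · intro h
    by_contra hc
    have h1 : jdx r x < r.length := lt_of_le_of_lt (not_lt.1 hc) hi
    have := jdx_getElem r x h1
    have := sorted_getElem_le hs (not_lt.1 hc) hi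
    omega
  · intro h
    exact getElem_lt_jdx r x i h

lemma sorted_insRow {r : List ℕ} (hs : r.Pairwise (· ≤ ·)) (x : ℕ) :
    (insRow r x).Pairwise (· ≤ ·) := by
  rw [List.pairwise_iff_get]
  intro a b hab
  simp only [List.get_eq_getElem]
  rw [getElem_insRow r x a a.isLt, getElem_insRow r x b b.isLt]
  have hlen : (insRow r x).length = max r.length (jdx r x + 1) := length_insRow r x
  have hj := jdx_le r x
  by_cases ha : (a : ℕ) = jdx r x
  · rw [dif_pos ha]
    by_cases hb : (b : ℕ) = jdx r x
    · omega
    · rw [dif_neg hb]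
      have hbr : (b : ℕ) < r.length := by
        have h5 := lt_of_lt_of_le b.isLt (le_of_eq hlen)
        rcases lt_max_iff.1 h5 with h' | h' <;> omega
      have h1 : jdx r x < r.length := by omega
      have := jdx_getElem r x h1
      have := sorted_getElem_le hs (i := jdx r x) (j := b) (by omega) hbr
      omega
  · rw [dif_neg ha]
    by_cases hb : (b : ℕ) = jdx r x
    · rw [dif_pos hb]
      have : (a : ℕ) < jdx r x := by omega
      exact getElem_lt_jdx r x a this
    · rw [dif_neg hb]
      have hbr : (b : ℕ) < r.length := by
        have h5 := lt_of_lt_of_le b.isLt (le_of_eq hlen)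
        rcases lt_max_iff.1 h5 with h' | h' <;> omega
      exact sorted_getElem_le hs (le_of_lt hab) hbr

lemma mem_of_getLast?' {l : List ℕ} {a : ℕ} (h : l.getLast? = some a) : a ∈ l := by
  obtain ⟨hne, heq⟩ := List.mem_getLast?_eq_getLast (l := l) (x := a) (by simp [h])
  exact heq ▸ List.getLast_mem hne

lemma sorted_le_getLast {s : List ℕ} (hs : s.Pairwise (· < ·)) {v : ℕ}
    (hv : s.getLast? = some v) : ∀ a ∈ s, a ≤ v := by
  induction s with
  | nil => simp
  | cons b t ih =>
    intro a ha
    rcases List.eq_nil_or_concat t with rfl | ⟨t', c, rfl⟩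
    · simp at hv ha; omega
    · simp only [List.concat_eq_append] at *
      rw [List.getLast?_cons, List.getLast?_concat] at hv
      simp only [Option.getD_some, Option.some.injEq] at hv
      subst hv
      rcases List.mem_cons.1 ha with rfl | ha'
      · have := (List.pairwise_cons.1 hs).1 c (by simp)
        omega
      · exact ih (List.pairwise_cons.1 hs).2 List.getLast?_concat a ha'

structure PInv (p R : List ℕ) : Prop where
  sorted : R.Pairwise (· ≤ ·)
  lower : ∀ i, ∀ _ : i < R.length, ∃ s : List ℕ, s.Sublist p ∧ s.Pairwise (· < ·) ∧
    s.length = i + 1 ∧ s.getLast? = some R[i]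
  upper : ∀ s : List ℕ, s.Sublist p → s.Pairwise (· < ·) → ∀ v, s.getLast? = some v →
    ∃ _ : s.length - 1 < R.length, R[s.length - 1] ≤ v

lemma inv_nil : PInv [] [] where
  sorted := List.Pairwise.nil
  lower := by intro i h; simp at h
  upper := by
    intro s hs _ v hv
    rw [List.sublist_nil] at hs; subst hs; simp at hv

lemma inv_step {p R : List ℕ} (h : PInv p R) {x : ℕ} (hx : x ∉ p) :
    PInv (p ++ [x]) (insRow R x) := by
  have hjle : jdx R x ≤ R.length := jdx_le R x
  have hlen : (insRow R x).length = max R.length (jdx R x + 1) := length_insRow R x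
  refine ⟨sorted_insRow h.sorted x, ?_, ?_⟩
  · -- lower
    intro i hi
    by_cases hij : i = jdx R x
    · have hgetx : (insRow R x)[i] = x := by
        rw [getElem_insRow R x i hi, dif_pos hij]
      rcases Nat.eq_zero_or_pos i with hj0 | hjpos
      · exact ⟨[x], List.sublist_append_right p [x], by simp, by simp [hj0],
          by simp [hgetx]⟩
      · have hkR : i - 1 < R.length := by omega
        obtain ⟨s, hs1, hs2, hs3, hs4⟩ := h.lower (i - 1) hkR
        have hklt : R[i-1] ≤ x := getElem_lt_jdx R x (i-1) (by omega)
        have hmem : R[i-1] ∈ p := hs1.subset (mem_of_getLast?' hs4)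
        have hne : R[i-1] ≠ x := fun hh => hx (hh ▸ hmem)
        have hstrict : R[i-1] < x := by omega
        refine ⟨s ++ [x], hs1.append (List.Sublist.refl [x]), ?_, by simp [hs3]; omega, ?_⟩
        · rw [List.pairwise_append]
          refine ⟨hs2, by simp, fun a ha b hb => ?_⟩
          simp at hb; subst hb
          have := sorted_le_getLast hs2 hs4 a ha
          omega
        · rw [List.getLast?_concat, hgetx]
    · have hiR : i < R.length := by
        have h5 := lt_of_lt_of_le hi (le_of_eq hlen)
        rcases lt_max_iff.1 h5 with h' | h' <;> omega
      obtain ⟨s, hs1, hs2, hs3, hs4⟩ := h.lower i hiR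
      refine ⟨s, hs1.trans (List.sublist_append_left p [x]), hs2, hs3, ?_⟩
      rw [getElem_insRow R x i hi, dif_neg hij]
      exact hs4
  · -- upper
    intro s hsub hsort v hv
    rw [List.sublist_append_iff] at hsub
    obtain ⟨s₁, s₂, rfl, h1, h2⟩ := hsub
    rcases List.sublist_singleton.1 h2 with rfl | rfl
    · -- s₂ = []
      rw [List.append_nil] at hsort hv ⊢
      obtain ⟨hlt, hle⟩ := h.upper s₁ h1 hsort v hv
      have hlt' : s₁.length - 1 < (insRow R x).length := by
        rw [hlen]; exact lt_max_iff.2 (Or.inl hlt)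
      refine ⟨hlt', ?_⟩
      rw [getElem_insRow R x _ hlt']
      by_cases hij : s₁.length - 1 = jdx R x
      · rw [dif_pos hij]
        have hxRj : x < R[jdx R x] := jdx_getElem R x (hij ▸ hlt)
        have : R[jdx R x]'(hij ▸ hlt) = R[s₁.length - 1] := by
          congr 1; omega
        omega
      · rw [dif_neg hij]; exact hle
    · -- s₂ = [x]
      have hvx : v = x := by rw [List.getLast?_concat] at hv; simpa using hv.symm
      subst hvx
      have hlens : (s₁ ++ [v]).length - 1 = s₁.length := by simp
      rcases List.eq_nil_or_concat s₁ with rfl | ⟨t, c, rfl⟩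
      · have h0 : 0 < (insRow R v).length := by rw [hlen]; omega
        refine ⟨by simpa using h0, ?_⟩
        simp only [List.nil_append, List.length_cons, List.length_nil]
        rw [getElem_insRow R v 0 h0]
        by_cases hij : 0 = jdx R v
        · rw [dif_pos hij]
        · rw [dif_neg hij]
          exact getElem_lt_jdx R v 0 (by omega)
      · simp only [List.concat_eq_append] at *
        have hsort1 : (t ++ [c]).Pairwise (· < ·) := (List.pairwise_append.1 hsort).1
        obtain ⟨hlt, hle⟩ := h.upper (t ++ [c]) h1 hsort1 c List.getLast?_concat
        have hcv : c < v := (List.pairwise_append.1 hsort).2.2 c (by simp) v (by simp)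
        have hklt : (t ++ [c]).length - 1 < jdx R v := by
          rw [← jdx_iff h.sorted hlt]; omega
        have hidx : (t ++ [c]).length ≤ jdx R v := by
          simp at hklt ⊢; omega
        have hlt' : ((t ++ [c]) ++ [v]).length - 1 < (insRow R v).length := by
          rw [hlen]; simp; right; simp at hidx; omega
        refine ⟨hlt', ?_⟩
        rw [getElem_insRow R v _ hlt']
        by_cases hij : ((t ++ [c]) ++ [v]).length - 1 = jdx R v
        · rw [dif_pos hij]
        · rw [dif_neg hij]
          refine getElem_lt_jdx R v _ ?_
          simp at hij hidx ⊢; omega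

def patience (l : List ℕ) : List ℕ := l.foldl insRow []

lemma inv_foldl (l : List ℕ) : ∀ p R : List ℕ, PInv p R → (p ++ l).Nodup →
    PInv (p ++ l) (l.foldl insRow R) := by
  induction l with
  | nil => intro p R h _; simpa using h
  | cons x l ih =>
    intro p R h hnd
    have hx : x ∉ p := by
      intro hmem
      have := List.disjoint_of_nodup_append hnd
      exact this hmem (by simp)
    have h' := inv_step h hx
    have hnd' : ((p ++ [x]) ++ l).Nodup := by simpa using hnd
    have := ih (p ++ [x]) (insRow R x) h' hnd'
    simpa using this

lemma inv_patience (l : List ℕ) (h : l.Nodup) : PInv l (patience l) := by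
  simpa [patience] using inv_foldl l [] [] inv_nil (by simpa)

/-- The set of lengths of strictly increasing subsequences. -/
def incSet (l : List ℕ) : Set ℕ :=
  {k | ∃ s : List ℕ, s.Sublist l ∧ s.Pairwise (· < ·) ∧ s.length = k}

lemma incSet_bdd (l : List ℕ) : BddAbove (incSet l) :=
  ⟨l.length, fun k ⟨s, hs, _, hlen⟩ => hlen ▸ hs.length_le⟩

lemma incSet_zero (l : List ℕ) : 0 ∈ incSet l := ⟨[], List.nil_sublist l, by simp, rfl⟩

lemma patience_length (l : List ℕ) (h : l.Nodup) :
    (patience l).length = sSup (incSet l) := by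
  have hinv := inv_patience l h
  apply le_antisymm
  · rcases Nat.eq_zero_or_pos (patience l).length with h0 | hpos
    · simp [h0]
    · have := hinv.lower ((patience l).length - 1) (by omega)
      obtain ⟨s, hs1, hs2, hs3, _⟩ := this
      have : (patience l).length ∈ incSet l := ⟨s, hs1, hs2, by omega⟩
      exact le_csSup (incSet_bdd l) this
  · refine csSup_le ⟨0, incSet_zero l⟩ ?_
    rintro k ⟨s, hs1, hs2, rfl⟩
    rcases List.eq_nil_or_concat s with rfl | ⟨t, c, rfl⟩
    · simp
    · have hlast : (t.concat c).getLast? = some c := by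
        simp [List.concat_eq_append, List.getLast?_concat]
      obtain ⟨hlt, _⟩ := hinv.upper _ hs1 hs2 c hlast
      simp at hlt ⊢
      omega

lemma headD_insertTableau (t : List (List ℕ)) (x : ℕ) :
    (insertTableau t x).headD [] = insRow (t.headD []) x := by
  cases t with
  | nil => simp [insertTableau, insRow, rowInsert]
  | cons r rs =>
    rcases hro : rowInsert r x with ⟨r', o⟩
    cases o <;> simp [insertTableau, hro, insRow]

lemma headD_foldl (l : List ℕ) : ∀ t : List (List ℕ),
    ((l.foldl insertTableau t).headD []) = l.foldl insRow (t.headD []) := by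
  induction l with
  | nil => intro t; rfl
  | cons x l ih =>
    intro t
    simp only [List.foldl_cons]
    rw [ih, headD_insertTableau]

/-- Length of the longest increasing subsequence of a permutation of `Fin n`. -/
noncomputable def lis {n : ℕ} (w : Equiv.Perm (Fin n)) : ℕ :=
  sSup {k : ℕ | ∃ f : Fin k → Fin n, StrictMono f ∧ StrictMono fun i => w (f i)}

lemma incSet_eq (n : ℕ) (w : Equiv.Perm (Fin n)) :
    incSet ((List.finRange n).map fun i => ((w i : ℕ) + 1)) =
      {k : ℕ | ∃ f : Fin k → Fin n, StrictMono f ∧ StrictMono fun i => w (f i)} := by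
  set l := (List.finRange n).map fun i => ((w i : ℕ) + 1) with hl0
  have hl : l.length = n := by simp [hl0]
  have hlget : ∀ (m : ℕ) (hm : m < l.length), l[m] = (w (⟨m, hl ▸ hm⟩ : Fin n) : ℕ) + 1 := by
    intro m hm
    simp [hl0, List.getElem_map, List.getElem_finRange]
  ext k
  constructor
  · rintro ⟨s, hsub, hsort, rfl⟩
    obtain ⟨is, hse, hpair⟩ := List.sublist_eq_map_getElem hsub
    have hislen : is.length = s.length := by rw [hse]; simp
    refine ⟨fun i => Fin.cast hl (is[(i : ℕ)]'(by omega)), ?_, ?_⟩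
    · intro i j hij
      have := List.pairwise_iff_get.1 hpair ⟨i, by omega⟩ ⟨j, by omega⟩ hij
      simpa only [Fin.lt_def, Fin.coe_cast, List.get_eq_getElem] using this
    · have hsget : ∀ (m : ℕ) (hm : m < s.length),
          s[m] = (w (Fin.cast hl (is[m]'(by omega))) : ℕ) + 1 := by
        intro m hm
        have h1 : s[m] = l[(is[m]'(by omega) : ℕ)]'(by
            have := (is[m]'(by omega)).isLt; omega) := by
          rw [List.getElem_of_eq hse, List.getElem_map]
          simp [List.get_eq_getElem]
        rw [h1, hlget]
        congr 1
      intro i j hij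
      have h2 := List.pairwise_iff_get.1 hsort ⟨i, i.isLt⟩ ⟨j, j.isLt⟩ hij
      simp only [List.get_eq_getElem] at h2
      rw [hsget i i.isLt, hsget j j.isLt] at h2
      simpa only [Fin.lt_def, Equiv.Perm.coe_mul, Function.comp] using by
        show (w _ : ℕ) < (w _ : ℕ); omega
  · rintro ⟨f, hf, hwf⟩
    refine ⟨List.ofFn (fun i : Fin k => (w (f i) : ℕ) + 1), ?_, ?_, by simp⟩
    · have he : List.ofFn (fun i : Fin k => (w (f i) : ℕ) + 1)
          = (List.ofFn (fun i : Fin k => Fin.cast hl.symm (f i))).map l.get := by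
        rw [List.map_ofFn]
        congr 1
        funext i
        show _ = l.get (Fin.cast hl.symm (f i))
        rw [List.get_eq_getElem, hlget]
        congr 1
      rw [he]
      refine List.map_getElem_sublist ?_
      rw [List.pairwise_ofFn]
      intro i j hij
      exact hf hij
    · rw [List.pairwise_ofFn]
      intro i j hij
      exact Nat.add_lt_add_right (hwf hij) 1

/-- Schensted's theorem: the length of the first row of the shape λ of the pair of
standard Young tableaux associated to w under the Schensted correspondence equals
the length of the longest increasing subsequence of w. -/
theorem schensted_first_row (n : ℕ) (w : Equiv.Perm (Fin n)) :
    ((pTableau ((List.finRange n).map fun i => ((w i : ℕ) + 1))).headD []).length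
      = lis w := by
  have hnd : ((List.finRange n).map fun i => ((w i : ℕ) + 1)).Nodup := by
    refine List.Nodup.map ?_ (List.nodup_finRange n)
    intro a b hab
    simp only at hab
    have : (w a : ℕ) = (w b : ℕ) := by omega
    exact w.injective (Fin.val_injective this)
  have h1 : (pTableau ((List.finRange n).map fun i => ((w i : ℕ) + 1))).headD []
      = patience ((List.finRange n).map fun i => ((w i : ℕ) + 1)) := by
    rw [pTableau, patience, headD_foldl]
    rfl
  rw [h1, patience_length _ hnd, lis, incSet_eq n w]
end
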